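/- arXiv:2202.09832 — 3 statements merged into one kernel-verified Lean document; each statement's English description precedes it below -/
import Mathlib

section
/- Define a sequence by a_0 = 0 and a_{n+1} = sqrt(a_n + 2). Then (2 - a_n) · 4^n converges to π²/4 as n → ∞. -/
/-!
Mathlib's `sqrtTwoAddSeries 0` satisfies the same recursion, and `a n = 2 cos (π / 2 ^ (n + 1))`.
By the half-angle formula `2 - a n = 4 sin² (π / 2 ^ (n + 2))`, so
`(2 - a n) 4 ^ n = (2 ^ (n + 2) sin (π / 2 ^ (n + 2)))² / 4`, and `t sin (π / t) → π` as `t → ∞`.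
-/

open Real Filter Topology

lemma Real.mul_sinc (x : ℝ) : x * sinc x = sin x := by
  rcases eq_or_ne x 0 with rfl | hx
  · simp
  · rw [sinc_of_ne_zero hx, mul_div_cancel₀ _ hx]

lemma Real.tendsto_mul_sin_div_of_tendsto_atTop {α : Type*} {l : Filter α} {f : α → ℝ}
    (hf : Tendsto f l atTop) (c : ℝ) : Tendsto (fun x ↦ f x * sin (c / f x)) l (𝓝 c) := by
  have hsinc : Tendsto (fun x ↦ c * sinc (c / f x)) l (𝓝 c) := by
    simpa using ((continuous_sinc.tendsto 0).comp (hf.const_div_atTop c)).const_mul c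
  refine hsinc.congr' ?_
  filter_upwards [hf.eventually_ne_atTop 0] with x hx
  rw [← mul_sinc, ← mul_assoc, mul_div_cancel₀ _ hx]

lemma Real.two_sub_sqrtTwoAddSeries (n : ℕ) :
    2 - sqrtTwoAddSeries 0 n = (2 * sin (π / 2 ^ (n + 2))) ^ 2 := by
  rw [sin_pi_over_two_pow_succ, mul_div_cancel₀ _ two_ne_zero,
    sq_sqrt (sub_nonneg.2 (sqrtTwoAddSeries_lt_two n).le)]

lemma eq_sqrtTwoAddSeries_of_rec {a : ℕ → ℝ} (h0 : a 0 = 0)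
    (hrec : ∀ n, a (n + 1) = √(a n + 2)) : a = sqrtTwoAddSeries 0 := by
  funext n
  induction n with
  | zero => exact h0
  | succ n ih => rw [hrec, ih, add_comm, sqrtTwoAddSeries]

theorem viete_rate_of_convergence
    (a : ℕ → ℝ) (h0 : a 0 = 0)
    (hrec : ∀ n, a (n + 1) = Real.sqrt (a n + 2)) :
    Filter.Tendsto (fun n => (2 - a n) * 4 ^ n) Filter.atTop
      (nhds (Real.pi ^ 2 / 4)) := by
  have hscaled (n : ℕ) :
      (2 - a n) * 4 ^ n = (2 ^ (n + 2) * sin (π / 2 ^ (n + 2))) ^ 2 / 4 := by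
    rw [eq_sqrtTwoAddSeries_of_rec h0 hrec, two_sub_sqrtTwoAddSeries,
      show (4 : ℝ) ^ n = (2 ^ n) ^ 2 by rw [← pow_mul, pow_mul']; norm_num]
    ring
  have hpow : Tendsto (fun n : ℕ ↦ (2 : ℝ) ^ (n + 2)) atTop atTop :=
    (tendsto_pow_atTop_atTop_of_one_lt one_lt_two).comp (tendsto_add_atTop_nat 2)
  simpa only [hscaled] using ((tendsto_mul_sin_div_of_tendsto_atTop hpow π).pow 2).div_const 4
end

section
/- Let f(z) = z² + c, p a repelling fixed point with multiplier μ = 2p, and let g be the local inverse branch of f fixing p as above. If q is in the domain of linearization, then the rescaled backward orbit μ^n (g^n(q) - p) converges to a limit in ℂ as n → ∞ (Koenigs linearization along the backward orbit). -/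
/-!
Put `w n = g^[n] q - p` and `μ = 2p`. Since `f z - p = (z - p)^2 + μ (z - p)`, the relation
`f (g z) = z` reads `w n = w (n+1)^2 + μ w (n+1)`, so the rescaled orbit `a n = μ^n w n` has
increments `a (n+1) - a n = -μ^n w (n+1)^2`, of size at most `‖a n‖ ‖w (n+1)‖`. The contraction
makes `‖w n‖` decay geometrically, so `a` is bounded and then Cauchy.
-/

open Filter Finset

section RelativeIncrements

variable {E : Type*} [SeminormedAddCommGroup E] {a : ℕ → E} {b : ℕ → ℝ}

theorem norm_le_mul_exp_sum_of_norm_sub_le (hb : ∀ n, 0 ≤ b n)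
    (h : ∀ n, ‖a (n + 1) - a n‖ ≤ ‖a n‖ * b n) (n : ℕ) :
    ‖a n‖ ≤ ‖a 0‖ * Real.exp (∑ i ∈ range n, b i) := by
  induction n with
  | zero => simp
  | succ n ih =>
    calc ‖a (n + 1)‖ ≤ ‖a n‖ + ‖a (n + 1) - a n‖ := norm_le_insert' _ _
      _ ≤ ‖a n‖ * (b n + 1) := by linarith [h n]
      _ ≤ ‖a 0‖ * Real.exp (∑ i ∈ range n, b i) * Real.exp (b n) :=
          mul_le_mul ih (Real.add_one_le_exp _) (by linarith [hb n]) (by positivity)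
      _ = ‖a 0‖ * Real.exp (∑ i ∈ range (n + 1), b i) := by
          rw [sum_range_succ, Real.exp_add, mul_assoc]

theorem cauchySeq_of_norm_sub_le_mul_summable (hb : ∀ n, 0 ≤ b n) (hsum : Summable b)
    (h : ∀ n, ‖a (n + 1) - a n‖ ≤ ‖a n‖ * b n) : CauchySeq a := by
  set M := ‖a 0‖ * Real.exp (∑' i, b i)
  have hbound : ∀ n, ‖a n‖ ≤ M := fun n =>
    (norm_le_mul_exp_sum_of_norm_sub_le hb h n).trans <|
      mul_le_mul_of_nonneg_left (Real.exp_le_exp.mpr (hsum.sum_le_tsum _ fun i _ => hb i))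
        (norm_nonneg _)
  refine cauchySeq_of_dist_le_of_summable (fun n => M * b n) (fun n => ?_) (hsum.mul_left M)
  rw [dist_comm, dist_eq_norm]
  exact (h n).trans (mul_le_mul_of_nonneg_right (hbound n) (hb n))

end RelativeIncrements

theorem cauchySeq_pow_mul_of_eq_sq_add_mul {𝕜 : Type*} [NormedField 𝕜] {μ : 𝕜} {w : ℕ → 𝕜}
    (hrec : ∀ n, w n = w (n + 1) ^ 2 + μ * w (n + 1))
    (hanti : ∀ n, ‖w (n + 1)‖ ≤ ‖w n‖) (hsum : Summable fun n => ‖w n‖) :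
    CauchySeq fun n => μ ^ n * w n := by
  refine cauchySeq_of_norm_sub_le_mul_summable (b := fun n => ‖w (n + 1)‖)
    (fun n => norm_nonneg _) ((summable_nat_add_iff 1).mpr hsum) fun n => ?_
  have hincr : μ ^ (n + 1) * w (n + 1) - μ ^ n * w n = -(μ ^ n * w (n + 1) ^ 2) := by
    linear_combination (-μ ^ n) * hrec n
  rw [hincr, norm_neg, norm_mul, norm_mul, norm_pow, mul_assoc]
  gcongr
  rw [norm_pow, sq]
  exact mul_le_mul_of_nonneg_right (hanti n) (norm_nonneg _)

theorem koenigs_along_backward_orbit_general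
    (c p : ℂ) (f : ℂ → ℂ) (hf : ∀ z, f z = z ^ 2 + c)
    (hfix : p ^ 2 + c = p)
    (ε : ℝ) (lam : ℝ) (hlam : 1 < lam)
    (g : ℂ → ℂ)
    (hg : ∀ z ∈ Metric.ball p ε, f (g z) = z ∧ g z ∈ Metric.ball p ε ∧
      ‖g z - p‖ ≤ (1 / lam) * ‖z - p‖) :
    ∀ q ∈ Metric.ball p ε, ∃ L : ℂ,
      Filter.Tendsto (fun n : ℕ => (2 * p) ^ n * (g^[n] q - p))
        Filter.atTop (nhds L) := by
  intro q hq
  have hr : 1 / lam < 1 := (div_lt_one (by linarith)).mpr hlam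
  have hmem : ∀ n, g^[n] q ∈ Metric.ball p ε :=
    fun n => Set.MapsTo.iterate (fun z hz => (hg z hz).2.1) n hq
  have hratio : ∀ n, ‖g^[n + 1] q - p‖ ≤ 1 / lam * ‖g^[n] q - p‖ := fun n => by
    rw [Function.iterate_succ_apply']
    exact (hg _ (hmem n)).2.2
  have hrec : ∀ n, g^[n] q - p = (g^[n + 1] q - p) ^ 2 + 2 * p * (g^[n + 1] q - p) := fun n => by
    have hinv := (hg _ (hmem n)).1
    rw [hf] at hinv
    rw [Function.iterate_succ_apply']
    linear_combination hfix - hinv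
  have hanti : ∀ n, ‖g^[n + 1] q - p‖ ≤ ‖g^[n] q - p‖ :=
    fun n => (hratio n).trans (mul_le_of_le_one_left (norm_nonneg _) hr.le)
  have hsum : Summable fun n => ‖g^[n] q - p‖ :=
    summable_of_ratio_norm_eventually_le hr (Eventually.of_forall fun n => by
      simpa only [norm_norm] using hratio n)
  exact cauchySeq_tendsto_of_complete (cauchySeq_pow_mul_of_eq_sq_add_mul hrec hanti hsum)

theorem koenigs_along_backward_orbit
    (c p : ℂ) (f : ℂ → ℂ) (hf : ∀ z, f z = z ^ 2 + c)
    (hfix : p ^ 2 + c = p) (hrep : 1 < ‖2 * p‖)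
    (ε : ℝ) (hε : 0 < ε) (lam : ℝ) (hlam : 1 < lam)
    (g : ℂ → ℂ) (hgp : g p = p)
    (hg : ∀ z ∈ Metric.ball p ε, f (g z) = z ∧ g z ∈ Metric.ball p ε ∧
      ‖g z - p‖ ≤ (1 / lam) * ‖z - p‖) :
    ∀ q ∈ Metric.ball p ε, ∃ L : ℂ,
      Filter.Tendsto (fun n : ℕ => (2 * p) ^ n * (g^[n] q - p))
        Filter.atTop (nhds L) :=
  koenigs_along_backward_orbit_general c p f hf hfix ε lam hlam g hg
end

section
/- Suppose f : ℂ → ℂ is holomorphic, p is a fixed point with |f'(p)| > 1, and (q_n) is a sequence with f(q_{n+1}) = q_n for all n and q_n → p with q_n ≠ p for all n. Then the sequence μ^n (q_n - p), where μ = f'(p), is bounded. -/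
/-!
Write `f z - p = (z - p) g(z)` with `g = dslope f p`, so that `g` is differentiable at `p` with
`g(p) = μ`. Along the backward orbit `|q_n - p| = |q_{n+1} - p| |g(q_{n+1})|`. Since
`|g(q_n)| → |μ| > 1`, the distances `d_n = |q_n - p|` decay geometrically; since
`|g(q_n)| ≥ |μ| - L d_n`, the rescaled distances `a_n = |μ|^n d_n` satisfy
`a_{n+1} ≤ a_n (1 + O(d_{n+1}))`. The product of these factors converges because `∑ d_n < ∞`,
so `a_n` is bounded.
-/

open Filter Topology Set Finset Real

theorem le_mul_exp_sum_Ico_of_le_mul_one_add {u e : ℕ → ℝ} {N : ℕ} (hu : 0 ≤ u N)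
    (he : ∀ n, 0 ≤ e n) (hrec : ∀ n ≥ N, u (n + 1) ≤ u n * (1 + e n)) :
    ∀ n ≥ N, u n ≤ u N * exp (∑ k ∈ Ico N n, e k) := by
  intro n hn
  induction n, hn using Nat.le_induction with
  | base => simp
  | succ n hn ih =>
    calc u (n + 1) ≤ u n * (1 + e n) := hrec n hn
      _ ≤ u N * exp (∑ k ∈ Ico N n, e k) * exp (e n) :=
          mul_le_mul ih (by linarith [add_one_le_exp (e n)]) (by linarith [he n]) (by positivity)
      _ = u N * exp (∑ k ∈ Ico N (n + 1), e k) := by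
          rw [sum_Ico_succ_top hn, exp_add, mul_assoc]

theorem bddAbove_range_of_le_mul_one_add {u e : ℕ → ℝ} (he : ∀ n, 0 ≤ e n) (hsum : Summable e)
    (hu : ∀ᶠ n in atTop, 0 ≤ u n) (hrec : ∀ᶠ n in atTop, u (n + 1) ≤ u n * (1 + e n)) :
    BddAbove (range u) := by
  obtain ⟨N, hN⟩ := eventually_atTop.1 (hu.and hrec)
  refine IsBoundedUnder.bddAbove_range
    (isBoundedUnder_of_eventually_le (a := u N * exp (∑' k, e k)) ?_)
  filter_upwards [eventually_ge_atTop N] with n hn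
  calc u n ≤ u N * exp (∑ k ∈ Ico N n, e k) :=
        le_mul_exp_sum_Ico_of_le_mul_one_add (hN N le_rfl).1 he (fun n hn => (hN n hn).2) n hn
    _ ≤ u N * exp (∑' k, e k) :=
        mul_le_mul_of_nonneg_left (exp_le_exp.2 (hsum.sum_le_tsum _ fun k _ => he k))
          (hN N le_rfl).1

theorem le_sub_mul_one_add_two_mul_div {c x : ℝ} (hc : 0 < c) (hx : 0 ≤ x) (hxc : x ≤ c / 2) :
    c ≤ (c - x) * (1 + 2 * x / c) := by
  have hprod : (c - x) * (2 * x / c) = 2 * x - 2 * x * x / c := by field_simp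
  have hquad : 2 * x * x / c ≤ x := by rw [div_le_iff₀ hc]; nlinarith
  linarith [mul_one_add (c - x) (2 * x / c)]

section BackwardOrbit

variable {𝕜 : Type*} [NontriviallyNormedField 𝕜] {f : 𝕜 → 𝕜} {p : 𝕜} {q : ℕ → 𝕜}

theorem norm_sub_eq_norm_sub_succ_mul_norm_dslope (hp : f p = p)
    (hback : ∀ n, f (q (n + 1)) = q n) (n : ℕ) :
    ‖q n - p‖ = ‖q (n + 1) - p‖ * ‖dslope f p (q (n + 1))‖ := by
  rw [← norm_mul, ← smul_eq_mul, sub_smul_dslope, hback, hp]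

theorem summable_norm_sub_of_backward_orbit (hf : DifferentiableAt 𝕜 f p) (hp : f p = p)
    (hrep : 1 < ‖deriv f p‖) (hback : ∀ n, f (q (n + 1)) = q n)
    (hlim : Tendsto q atTop (𝓝 p)) :
    Summable fun n => ‖q n - p‖ := by
  obtain ⟨s, hs1, hsc⟩ := exists_between hrep
  have hgrowth : ∀ᶠ n in atTop, s < ‖dslope f p (q n)‖ := by
    have h := ((continuousAt_dslope_same.2 hf).tendsto.comp hlim).norm
    rw [dslope_same] at h
    exact h.eventually_const_lt hsc
  refine summable_of_ratio_norm_eventually_le (inv_lt_one_of_one_lt₀ hs1) ?_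
  filter_upwards [(tendsto_add_atTop_nat 1).eventually hgrowth] with n hn
  rw [norm_norm, norm_norm, le_inv_mul_iff₀ (one_pos.trans hs1),
    norm_sub_eq_norm_sub_succ_mul_norm_dslope hp hback n, mul_comm s]
  exact mul_le_mul_of_nonneg_left hn.le (norm_nonneg _)

theorem bddAbove_range_norm_deriv_pow_mul_norm_sub_of_backward_orbit
    (hg : DifferentiableAt 𝕜 (dslope f p) p) (hp : f p = p) (hrep : 1 < ‖deriv f p‖)
    (hback : ∀ n, f (q (n + 1)) = q n) (hlim : Tendsto q atTop (𝓝 p)) :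
    BddAbove (range fun n => ‖deriv f p‖ ^ n * ‖q n - p‖) := by
  set c := ‖deriv f p‖
  have hc : 0 < c := one_pos.trans hrep
  have hsum := summable_norm_sub_of_backward_orbit hg.of_dslope hp hrep hback hlim
  obtain ⟨L, hL, hbig⟩ := (hg.isBigO_sub.comp_tendsto hlim).exists_nonneg
  have hslope : ∀ᶠ n in atTop, c - L * ‖q n - p‖ ≤ ‖dslope f p (q n)‖ := by
    filter_upwards [hbig.bound] with n hn
    simp only [Function.comp_apply, dslope_same] at hn
    linarith [norm_sub_norm_le (deriv f p) (dslope f p (q n)),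
      norm_sub_rev (deriv f p) (dslope f p (q n))]
  have hsmall : ∀ᶠ n in atTop, L * ‖q n - p‖ ≤ c / 2 := by
    have h := (tendsto_iff_norm_sub_tendsto_zero.1 hlim).const_mul L
    rw [mul_zero] at h
    exact h.eventually (ge_mem_nhds (half_pos hc))
  set e : ℕ → ℝ := fun n => 2 * (L * ‖q (n + 1) - p‖) / c
  have he : ∀ n, 0 ≤ e n := fun n => by positivity
  refine bddAbove_range_of_le_mul_one_add he
    (((hsum.comp_injective (add_left_injective 1)).mul_left L).mul_left 2 |>.div_const c)
    (Eventually.of_forall fun n => by positivity) ?_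
  filter_upwards [(tendsto_add_atTop_nat 1).eventually (hslope.and hsmall)] with n ⟨hγ, hLd⟩
  calc c ^ (n + 1) * ‖q (n + 1) - p‖ = c ^ n * (‖q (n + 1) - p‖ * c) := by ring
    _ ≤ c ^ n * (‖q (n + 1) - p‖ * ((c - L * ‖q (n + 1) - p‖) * (1 + e n))) := by
        gcongr
        exact le_sub_mul_one_add_two_mul_div hc (by positivity) hLd
    _ ≤ c ^ n * (‖q (n + 1) - p‖ * (‖dslope f p (q (n + 1))‖ * (1 + e n))) := by
        gcongr
    _ = c ^ n * ‖q n - p‖ * (1 + e n) := by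
        rw [norm_sub_eq_norm_sub_succ_mul_norm_dslope hp hback n]
        ring

end BackwardOrbit

theorem rescaled_backward_orbit_bounded_general
    (f : ℂ → ℂ) (p : ℂ) (hf : AnalyticAt ℂ f p) (hp : f p = p)
    (μ : ℂ) (hμ : μ = deriv f p) (hrep : 1 < ‖μ‖)
    (q : ℕ → ℂ) (hback : ∀ n, f (q (n + 1)) = q n)
    (hlim : Filter.Tendsto q Filter.atTop (nhds p)) :
    ∃ C : ℝ, ∀ n : ℕ, ‖μ ^ n * (q n - p)‖ ≤ C := by
  subst hμ
  obtain ⟨_, hps⟩ := hf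
  obtain ⟨C, hC⟩ := bddAbove_range_norm_deriv_pow_mul_norm_sub_of_backward_orbit
    hps.has_fpower_series_dslope_fslope.differentiableAt hp hrep hback hlim
  exact ⟨C, fun n => by simpa only [norm_mul, norm_pow] using hC (mem_range_self n)⟩

theorem rescaled_backward_orbit_bounded
    (f : ℂ → ℂ) (p : ℂ) (hf : AnalyticAt ℂ f p) (hp : f p = p)
    (μ : ℂ) (hμ : μ = deriv f p) (hrep : 1 < ‖μ‖)
    (q : ℕ → ℂ) (hback : ∀ n, f (q (n + 1)) = q n)
    (hlim : Filter.Tendsto q Filter.atTop (nhds p))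
    (hne : ∀ n, q n ≠ p) :
    ∃ C : ℝ, ∀ n : ℕ, ‖μ ^ n * (q n - p)‖ ≤ C :=
  rescaled_backward_orbit_bounded_general f p hf hp μ hμ hrep q hback hlim
end
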